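/- Let i_d, i_q, θ : ℝ → ℝ be differentiable, fix t ∈ ℝ, set ω = θ'(t), and form the IPMSM observability determinant Δ_y at time t using di_d = i_d'(t), di_q = i_q'(t). Set a(s) = Lδ·i_d(s) + ψ_r and b(s) = Lδ·i_q(s). If a(t) ≠ 0 and a(t)² + b(t)² ≠ 0, then Δ_y ≠ 0 if and only if ω ≠ (d/ds)|_{s=t} arctan(b(s)/a(s)); i.e., for the IPMSM the rank condition holds exactly when the electrical speed differs from the rotational velocity of the observability vector (active flux, Lδ·i_q) in the rotor frame. -/

import Mathlib

open Matrix Real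

/-- The PMSM (2×2) inductance matrix 𝔏(θ). -/
noncomputable def Lmat2 (Ld Lq θ : ℝ) : Matrix (Fin 2) (Fin 2) ℝ :=
  !![(Ld + Lq)/2 + (Ld - Lq)/2 * Real.cos (2*θ), (Ld - Lq)/2 * Real.sin (2*θ);
     (Ld - Lq)/2 * Real.sin (2*θ), (Ld + Lq)/2 - (Ld - Lq)/2 * Real.cos (2*θ)]

/-- The first entrywise θ-derivative 𝔏'(θ). -/
noncomputable def Lmat2' (Ld Lq θ : ℝ) : Matrix (Fin 2) (Fin 2) ℝ :=
  !![-2 * ((Ld - Lq)/2) * Real.sin (2*θ), 2 * ((Ld - Lq)/2) * Real.cos (2*θ);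
     2 * ((Ld - Lq)/2) * Real.cos (2*θ), 2 * ((Ld - Lq)/2) * Real.sin (2*θ)]

/-- The second entrywise θ-derivative 𝔏''(θ). -/
noncomputable def Lmat2'' (Ld Lq θ : ℝ) : Matrix (Fin 2) (Fin 2) ℝ :=
  !![-4 * ((Ld - Lq)/2) * Real.cos (2*θ), -4 * ((Ld - Lq)/2) * Real.sin (2*θ);
     -4 * ((Ld - Lq)/2) * Real.sin (2*θ), 4 * ((Ld - Lq)/2) * Real.cos (2*θ)]

/-- The rotor permanent-magnet flux vector ψ(θ). -/
noncomputable def psiVec (ψr θ : ℝ) : Fin 2 → ℝ := ψr • ![Real.cos θ, Real.sin θ]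

/-- Its θ-derivative ψ'(θ). -/
noncomputable def psiVec' (ψr θ : ℝ) : Fin 2 → ℝ := ψr • ![-Real.sin θ, Real.cos θ]

/-- Its second θ-derivative ψ''(θ) = −ψ(θ). -/
noncomputable def psiVec'' (ψr θ : ℝ) : Fin 2 → ℝ := -psiVec ψr θ

/-- The 2×2 rotation matrix R(θ). -/
noncomputable def Rmat (θ : ℝ) : Matrix (Fin 2) (Fin 2) ℝ :=
  !![Real.cos θ, -Real.sin θ;
     Real.sin θ, Real.cos θ]

/-- Its entrywise θ-derivative R'(θ). -/
noncomputable def Rmat' (θ : ℝ) : Matrix (Fin 2) (Fin 2) ℝ :=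
  !![-Real.sin θ, -Real.cos θ;
     Real.cos θ, -Real.sin θ]

/-- The PMSM observability determinant Δ_y, built from
c₁ = −𝔏(θ)⁻¹·(𝔏'(θ)·I + ψ'(θ)) and c₂ = −𝔏(θ)⁻¹·(𝔏'(θ)·dI + ω·(𝔏''(θ)·I + ψ''(θ))),
where I = R(θ)·(i_d, i_q)ᵀ and dI = R(θ)·(di_d, di_q)ᵀ + ω·R'(θ)·(i_d, i_q)ᵀ. -/
noncomputable def deltaY2 (Ld Lq ψr θ ω i_d i_q di_d di_q : ℝ) : ℝ :=
  let I : Fin 2 → ℝ := Rmat θ *ᵥ ![i_d, i_q]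
  let dI : Fin 2 → ℝ := Rmat θ *ᵥ ![di_d, di_q] + ω • (Rmat' θ *ᵥ ![i_d, i_q])
  let c₁ : Fin 2 → ℝ := -((Lmat2 Ld Lq θ)⁻¹ *ᵥ (Lmat2' Ld Lq θ *ᵥ I + psiVec' ψr θ))
  let c₂ : Fin 2 → ℝ :=
    -((Lmat2 Ld Lq θ)⁻¹ *ᵥ (Lmat2' Ld Lq θ *ᵥ dI + ω • (Lmat2'' Ld Lq θ *ᵥ I + psiVec'' ψr θ)))
  c₁ 0 * c₂ 1 - c₁ 1 * c₂ 0

private lemma crossMulVec (M : Matrix (Fin 2) (Fin 2) ℝ) (u v : Fin 2 → ℝ) :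
    (M *ᵥ u) 0 * (M *ᵥ v) 1 - (M *ᵥ u) 1 * (M *ᵥ v) 0 =
      M.det * (u 0 * v 1 - u 1 * v 0) := by
  simp [Matrix.mulVec, dotProduct, Fin.sum_univ_two, Matrix.det_fin_two]
  ring

private lemma det_Lmat2 (Ld Lq θ : ℝ) : (Lmat2 Ld Lq θ).det = Ld * Lq := by
  have h := Real.sin_sq_add_cos_sq (2*θ)
  simp [Lmat2, Matrix.det_fin_two_of]
  linear_combination (-(((Ld-Lq)/2)^2)) * h

private lemma deltaY2_eq (Ld Lq : ℝ) (hLd : Ld ≠ 0) (hLq : Lq ≠ 0)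
    (ψr θ ω i_d i_q di_d di_q : ℝ) :
    deltaY2 Ld Lq ψr θ ω i_d i_q di_d di_q =
      (ω * (((Ld - Lq) * i_d + ψr)^2 + ((Ld - Lq) * i_q)^2)
        - (((Ld - Lq) * i_d + ψr) * ((Ld - Lq) * di_q)
            - ((Ld - Lq) * i_q) * ((Ld - Lq) * di_d))) / (Ld * Lq) := by
  have hA : Ld * Lq ≠ 0 := mul_ne_zero hLd hLq
  have h := Real.sin_sq_add_cos_sq θ
  simp only [deltaY2]
  have hneg : ∀ (M : Matrix (Fin 2) (Fin 2) ℝ) (x : Fin 2 → ℝ) (i : Fin 2),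
      (-(M *ᵥ x)) i = ((-M) *ᵥ x) i := by
    intro M x i; rw [Matrix.neg_mulVec]
  rw [hneg, hneg, hneg, hneg, crossMulVec]
  have hdetneg : (-(Lmat2 Ld Lq θ)⁻¹).det = (Ld*Lq)⁻¹ := by
    rw [Matrix.det_neg, Matrix.det_nonsing_inv, det_Lmat2]
    simp [Ring.inverse_eq_inv']
  rw [hdetneg]
  rw [inv_mul_eq_div, div_eq_div_iff hA hA]
  have hkey : ((Lmat2' Ld Lq θ *ᵥ (Rmat θ *ᵥ ![i_d, i_q]) + psiVec' ψr θ) 0 *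
      (Lmat2' Ld Lq θ *ᵥ (Rmat θ *ᵥ ![di_d, di_q] + ω • (Rmat' θ *ᵥ ![i_d, i_q])) +
        ω • (Lmat2'' Ld Lq θ *ᵥ (Rmat θ *ᵥ ![i_d, i_q]) + psiVec'' ψr θ)) 1 -
      (Lmat2' Ld Lq θ *ᵥ (Rmat θ *ᵥ ![i_d, i_q]) + psiVec' ψr θ) 1 *
      (Lmat2' Ld Lq θ *ᵥ (Rmat θ *ᵥ ![di_d, di_q] + ω • (Rmat' θ *ᵥ ![i_d, i_q])) +
        ω • (Lmat2'' Ld Lq θ *ᵥ (Rmat θ *ᵥ ![i_d, i_q]) + psiVec'' ψr θ)) 0) =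
      (ω * (((Ld - Lq) * i_d + ψr)^2 + ((Ld - Lq) * i_q)^2)
        - (((Ld - Lq) * i_d + ψr) * ((Ld - Lq) * di_q)
            - ((Ld - Lq) * i_q) * ((Ld - Lq) * di_d))) := by
    simp [Lmat2', Lmat2'', psiVec, psiVec', psiVec'', Rmat, Rmat', Matrix.mulVec,
      dotProduct, Fin.sum_univ_two, Real.cos_two_mul, Real.sin_two_mul,
      Pi.add_apply, Pi.smul_apply, Pi.neg_apply, smul_eq_mul]
    linear_combination (ψr^2*ω + Lq*ψr*di_q + (-2 : ℝ)*Lq*ψr*ω*i_d + Lq^2*i_q*di_d + (-1 : ℝ)*Lq^2*i_d*di_q + Lq^2*ω*i_q^2 + Lq^2*ω*i_d^2 + (-1 : ℝ)*Ld*ψr*di_q + (2 : ℝ)*Ld*ψr*ω*i_d + (-2 : ℝ)*Ld*Lq*i_q*di_d + (2 : ℝ)*Ld*Lq*i_d*di_q + (-2 : ℝ)*Ld*Lq*ω*i_q^2 + (-2 : ℝ)*Ld*Lq*ω*i_d^2 + Ld^2*i_q*di_d + (-1 : ℝ)*Ld^2*i_d*di_q + Ld^2*ω*i_q^2 + Ld^2*ω*i_d^2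 + (2 : ℝ)*Real.cos θ^2*Lq*ψr*di_q + (-4 : ℝ)*Real.cos θ^2*Lq*ψr*ω*i_d + (-2 : ℝ)*Real.cos θ^2*Ld*ψr*di_q + (4 : ℝ)*Real.cos θ^2*Ld*ψr*ω*i_d + (4 : ℝ)*Real.cos θ^4*Lq^2*i_q*di_d + (-4 : ℝ)*Real.cos θ^4*Lq^2*i_d*di_q + (4 : ℝ)*Real.cos θ^4*Lq^2*ω*i_q^2 + (4 : ℝ)*Real.cos θ^4*Lq^2*ω*i_d^2 + (-8 : ℝ)*Real.cos θ^4*Ld*Lq*i_q*di_d + (8 : ℝ)*Real.cos θ^4*Ld*Lq*i_d*di_q + (-8 : ℝ)*Real.cos θ^4*Ld*Lq*ω*i_q^2 + (-8 : ℝ)*Real.cos θ^4*Ld*Lq*ω*i_d^2 + (4 : ℝ)*Real.cos θ^4*Ld^2*i_q*di_d + (-4 : ℝ)*Real.cos θ^4*Ld^2*i_d*di_q + (4 : ℝ)*Real.cos θ^4*Ld^2*ω*i_q^2 + (4 : ℝ)*Real.cos θ^4*Ld^2*ω*i_d^2 + (2 : ℝ)*Real.sin θ*Real.cos θ*Lq*ψr*di_d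 + (4 : ℝ)*Real.sin θ*Real.cos θ*Lq*ψr*ω*i_q + (-2 : ℝ)*Real.sin θ*Real.cos θ*Ld*ψr*di_d + (-4 : ℝ)*Real.sin θ*Real.cos θ*Ld*ψr*ω*i_q + (4 : ℝ)*Real.sin θ^2*Real.cos θ^2*Lq^2*i_q*di_d + (-4 : ℝ)*Real.sin θ^2*Real.cos θ^2*Lq^2*i_d*di_q + (4 : ℝ)*Real.sin θ^2*Real.cos θ^2*Lq^2*ω*i_q^2 + (4 : ℝ)*Real.sin θ^2*Real.cos θ^2*Lq^2*ω*i_d^2 + (-8 : ℝ)*Real.sin θ^2*Real.cos θ^2*Ld*Lq*i_q*di_d + (8 : ℝ)*Real.sin θ^2*Real.cos θ^2*Ld*Lq*i_d*di_q + (-8 : ℝ)*Real.sin θ^2*Real.cos θ^2*Ld*Lq*ω*i_q^2 + (-8 : ℝ)*Real.sin θ^2*Real.cos θ^2*Ld*Lq*ω*i_d^2 + (4 : ℝ)*Real.sin θ^2*Real.cos θ^2*Ld^2*i_q*di_d + (-4 : ℝ)*Real.sin θ^2*Real.cos θ^2*Ld^2*i_d*di_q + (4 : ℝ)*Real.sin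 θ^2*Real.cos θ^2*Ld^2*ω*i_q^2 + (4 : ℝ)*Real.sin θ^2*Real.cos θ^2*Ld^2*ω*i_d^2) * h
  rw [hkey]

/-- For the IPMSM with time-varying currents and position,
a(s) = Lδ·i_d(s) + ψ_r, b(s) = Lδ·i_q(s), if a(t) ≠ 0 and a(t)² + b(t)² ≠ 0 then
Δ_y ≠ 0 iff ω ≠ (d/ds)|_{s=t} arctan(b(s)/a(s)). -/
theorem ipmsm_observability_condition (Ld Lq : ℝ) (hLd : Ld ≠ 0) (hLq : Lq ≠ 0) (ψr : ℝ)
    (i_d i_q θ : ℝ → ℝ)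
    (hid : Differentiable ℝ i_d) (hiq : Differentiable ℝ i_q) (hθ : Differentiable ℝ θ)
    (t : ℝ) (a b : ℝ → ℝ)
    (ha : ∀ s, a s = (Ld - Lq) * i_d s + ψr)
    (hb : ∀ s, b s = (Ld - Lq) * i_q s)
    (hat : a t ≠ 0) (hden : a t ^ 2 + b t ^ 2 ≠ 0) :
    deltaY2 Ld Lq ψr (θ t) (deriv θ t) (i_d t) (i_q t) (deriv i_d t) (deriv i_q t) ≠ 0 ↔
      deriv θ t ≠ deriv (fun s => Real.arctan (b s / a s)) t := by
  have hA : Ld * Lq ≠ 0 := mul_ne_zero hLd hLq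
  have hda : HasDerivAt a ((Ld - Lq) * deriv i_d t) t := by
    have : HasDerivAt (fun s => (Ld - Lq) * i_d s + ψr) ((Ld - Lq) * deriv i_d t) t :=
      ((hid t).hasDerivAt.const_mul (Ld - Lq)).add_const ψr
    exact (funext ha : a = _) ▸ this
  have hdb : HasDerivAt b ((Ld - Lq) * deriv i_q t) t := by
    have : HasDerivAt (fun s => (Ld - Lq) * i_q s) ((Ld - Lq) * deriv i_q t) t :=
      (hiq t).hasDerivAt.const_mul (Ld - Lq)
    exact (funext hb : b = _) ▸ this
  have hquot : HasDerivAt (fun s => b s / a s)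
      (((Ld - Lq) * deriv i_q t * a t - b t * ((Ld - Lq) * deriv i_d t)) / a t ^ 2) t :=
    hdb.div hda hat
  have harc : HasDerivAt (fun s => Real.arctan (b s / a s))
      (1 / (1 + (b t / a t) ^ 2) *
        (((Ld - Lq) * deriv i_q t * a t - b t * ((Ld - Lq) * deriv i_d t)) / a t ^ 2)) t :=
    hquot.arctan
  have hD : deriv (fun s => Real.arctan (b s / a s)) t =
      (a t * ((Ld - Lq) * deriv i_q t) - b t * ((Ld - Lq) * deriv i_d t)) /
        (a t ^ 2 + b t ^ 2) := by
    rw [harc.deriv]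
    have h1 : (1 : ℝ) + (b t / a t) ^ 2 ≠ 0 := by positivity
    field_simp
  rw [hD, deltaY2_eq Ld Lq hLd hLq, ← ha t, ← hb t]
  rw [ne_eq, div_eq_zero_iff, sub_eq_zero, not_or, ne_eq, eq_div_iff hden]
  exact ⟨fun h => h.1, fun h => ⟨h, hA⟩⟩
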